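/- arXiv:1609.01931 — 3 statements merged into one kernel-verified Lean document; each statement's English description precedes it below -/
import Mathlib

section
/- For every p ∈ NC(n) the Kreweras complement K(p) is again non-crossing, and the map K : NC(n) → NC(n) is a bijection. -/
namespace NCPaper

/-- The index set `[n] = {1, …, n}` inside `ℕ`. -/
def Idx (n : ℕ) : Set ℕ := Set.Icc 1 n

/-- `r` is (the equivalence relation of) a partition of the set `S`:
a symmetric, transitive relation on `ℕ` whose domain is exactly `S`.
For `S ⊆ [n]` this encodes a partial partition of `[n]` with support `S`;
its blocks are the equivalence classes. -/
def IsPartitionOn (S : Set ℕ) (r : ℕ → ℕ → Prop) : Prop :=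
  (∀ i j, r i j → r j i) ∧ (∀ i j k, r i j → r j k → r i k) ∧ (∀ i, r i i ↔ i ∈ S)

/-- A partition (relation) is non-crossing if there are no `i < j < k < l`
with `i ∼ k`, `j ∼ l` and `i ≁ j`. -/
def NonCrossing (r : ℕ → ℕ → Prop) : Prop :=
  ∀ i j k l, i < j → j < k → k < l → r i k → r j l → r i j

/-- Refinement order on partitions encoded as relations:
`r ≤ s` iff every block of `r` is contained in a block of `s`. -/
def RelLE (r s : ℕ → ℕ → Prop) : Prop := ∀ i j, r i j → s i j

/-- Join of two partial partitions with complementary (disjoint) supports: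
the partition whose blocks are the blocks of `r` together with those of `s`. -/
def relJoin (r s : ℕ → ℕ → Prop) : ℕ → ℕ → Prop := fun i j => r i j ∨ s i j

/-- `k` lies (weakly) between `i` and `j`, i.e. `k ∈ {min i j, …, max i j}`. -/
def Between (i j k : ℕ) : Prop := min i j ≤ k ∧ k ≤ max i j

/-- The Kreweras complement `kr(r, S)` of the partial partition `(r, S)` of `[n]`:
the relation with support `[n] \ S` in which `i ∼ j` iff no element `k` of
`{i,…,j} ∩ S` is `r`-equivalent to an element `l` of `S \ {i,…,j}`. -/
def krRel (n : ℕ) (S : Set ℕ) (r : ℕ → ℕ → Prop) : ℕ → ℕ → Prop :=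
  fun i j => i ∈ Idx n ∧ j ∈ Idx n ∧ i ∉ S ∧ j ∉ S ∧
    ∀ k l, k ∈ S → l ∈ S → Between i j k → ¬ Between i j l → ¬ r k l

/-- Transport of a relation along a map. -/
def mapRel (f : ℕ → ℕ) (r : ℕ → ℕ → Prop) : ℕ → ℕ → Prop :=
  fun a b => ∃ i j, f i = a ∧ f j = b ∧ r i j

/-- `i ↦ 2i - δ(i)` where `δ(i) = 1` for odd `i` and `δ(i) = 0` for even `i`;
this maps `[2k]` onto `S = {1,4,5,8,…,4k-3,4k} ⊆ [4k]`. -/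
def fS (i : ℕ) : ℕ := 2 * i - i % 2

/-- `i ↦ 2i - (1 - δ(i))`; this maps `[2k]` onto `Sᶜ = {2,3,6,7,…} ⊆ [4k]`. -/
def fSc (i : ℕ) : ℕ := 2 * i - (1 - i % 2)

/-- The nested Kreweras complement `kr′(π)` of a partition `π` of `[2k]`:
transport `π` along `fS` to a partial partition of `[4k]` with support
`fS '' [2k]`, take its Kreweras complement and transport back along `fSc`. -/
def krNested (k : ℕ) (r : ℕ → ℕ → Prop) : ℕ → ℕ → Prop :=
  fun i j => krRel (4 * k) (fS '' Idx (2 * k)) (mapRel fS r) (fSc i) (fSc j)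

/-- `π₀`: the partition of `[2k]` with blocks `{2i, 2i+1}`, indices mod `2k`
(so one block is `{2k, 1}`). -/
def piZero (k : ℕ) : ℕ → ℕ → Prop := fun i j =>
  i ∈ Idx (2 * k) ∧ j ∈ Idx (2 * k) ∧
    (i = j ∨ (Even i ∧ j = i + 1) ∨ (Even j ∧ i = j + 1) ∨
      (i = 1 ∧ j = 2 * k) ∨ (j = 1 ∧ i = 2 * k))

/-- `π₁`: the partition of `[2k]` with blocks `{2i-1, 2i}`, `1 ≤ i ≤ k`. -/
def piOne (k : ℕ) : ℕ → ℕ → Prop := fun i j =>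
  i ∈ Idx (2 * k) ∧ j ∈ Idx (2 * k) ∧
    (i = j ∨ (Odd i ∧ j = i + 1) ∨ (Odd j ∧ i = j + 1))

/-- The `i`-th odd position `2i - 1` in `[2n]`. -/
def oddPos (i : ℕ) : ℕ := 2 * i - 1

/-- The `i`-th even position `2i` in `[2n]`. -/
def evenPos (i : ℕ) : ℕ := 2 * i

/-- The Kreweras complement `K(p)` of a partition `p` of `[n]`: transport `p`
along `i ↦ 2i-1` to the odd positions `σ = {1,3,…,2n-1}` of `[2n]`, take the
Kreweras complement there, and transport back along `i ↦ 2i`. -/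
def Kmap (n : ℕ) (r : ℕ → ℕ → Prop) : ℕ → ℕ → Prop :=
  fun i j => krRel (2 * n) (oddPos '' Idx n) (mapRel oddPos r) (evenPos i) (evenPos j)

/-- `p° = (p̂,σ) ∨ (K̂(p),σᶜ)`: the partition of `[2n]` obtained by placing `p`
on the odd positions and `K(p)` on the even positions. -/
def pCirc (n : ℕ) (p : ℕ → ℕ → Prop) : ℕ → ℕ → Prop :=
  relJoin (mapRel oddPos p) (mapRel evenPos (Kmap n p))

/-- `F(π)` for `π ≥ π₀`: `i ∼ j` iff `2i-1 ∼_π 2j-1`. -/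
def Fmap (r : ℕ → ℕ → Prop) : ℕ → ℕ → Prop := fun i j => r (2 * i - 1) (2 * j - 1)

/-- `G(π)` for `π ≥ π₁`: `i ∼ j` iff `2i ∼_π 2j`. -/
def Gmap (r : ℕ → ℕ → Prop) : ℕ → ℕ → Prop := fun i j => r (2 * i) (2 * j)

/-- `B` is a block of the partition (relation) `r`. -/
def IsBlock (r : ℕ → ℕ → Prop) (B : Set ℕ) : Prop := ∃ i, r i i ∧ B = {j | r i j}

/-- The number `|r|` of blocks of the partition `r`. -/
noncomputable def numBlocks (r : ℕ → ℕ → Prop) : ℕ := {B : Set ℕ | IsBlock r B}.ncard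

/-- `B' ⪯ B` for `B = {i₁<…<i_t}`, `B' = {j₁<…<j_{t'}}`: `i₁ < j₁` and `j_{t'} < i_t`. -/
def Nested (B' B : Set ℕ) : Prop := sInf B < sInf B' ∧ sSup B' < sSup B

/-- The depth `d_p(B)` of a block `B`: the maximal number `m` of blocks in a
chain `B = X₁ ⪯ X₂ ⪯ … ⪯ X_m` of blocks of `p`. -/
noncomputable def depth (p : ℕ → ℕ → Prop) (B : Set ℕ) : ℕ :=
  sSup {m : ℕ | ∃ c : ℕ → Set ℕ, c 1 = B ∧
    (∀ i, 1 ≤ i → i ≤ m → IsBlock p (c i)) ∧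
    (∀ i, 1 ≤ i → i < m → Nested (c i) (c (i + 1)))}

/-- `p_{B,B'}`: the partition obtained from `p` by merging the blocks `B` and `B'`. -/
def mergeRel (p : ℕ → ℕ → Prop) (B B' : Set ℕ) : ℕ → ℕ → Prop :=
  fun i j => p i j ∨ (p i i ∧ p j j ∧ i ∈ B ∪ B' ∧ j ∈ B ∪ B')

/-- Two distinct blocks `B, B'` of `p` are adjacent if replacing them by
`B ∪ B'` yields a non-crossing partition. -/
def Adjacent (p : ℕ → ℕ → Prop) (B B' : Set ℕ) : Prop :=
  IsBlock p B ∧ IsBlock p B' ∧ B ≠ B' ∧ NonCrossing (mergeRel p B B')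

/-- The set of the `i` smallest elements of `B`. -/
def lowerPart (B : Set ℕ) (i : ℕ) : Set ℕ := {x ∈ B | (B ∩ Set.Iic x).ncard ≤ i}

/-- The set of the remaining elements of `B` (all but the `i` smallest). -/
def upperPart (B : Set ℕ) (i : ℕ) : Set ℕ := {x ∈ B | i < (B ∩ Set.Iic x).ncard}

/-- `p_{B,i}`: the partition obtained from `p` by splitting the block `B` into
the block of its `i` smallest elements and the block of its remaining elements. -/
def splitRel (p : ℕ → ℕ → Prop) (B : Set ℕ) (i : ℕ) : ℕ → ℕ → Prop :=
  fun x y => p x y ∧ ((x ∈ lowerPart B i ∧ y ∈ lowerPart B i) ∨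
    (x ∈ upperPart B i ∧ y ∈ upperPart B i) ∨ (x ∉ B ∧ y ∉ B))

/-- The `i`-th smallest element of `B` (1-indexed). -/
noncomputable def nthSmall (B : Set ℕ) (i : ℕ) : ℕ :=
  sInf {x | x ∈ B ∧ (B ∩ Set.Iic x).ncard = i}

/-! Place `p` on the odd positions of `[2n]`; `K(p)` is then its Kreweras complement, read on the
even positions. A Kreweras complement is always a non-crossing partition of the complementary
support, and for a non-crossing partition `r` on a support `S` with no two cyclically adjacent
points, `kr(kr(r)) = r`: if `a < b` lie in different blocks of `r`, then either `b` falls into a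
gap `(c, d)` of the block of `a`, or it lies beyond the whole span `[m, M]` of that block; by
non-crossing, `(c, d)` resp. `[m, M]` is a union of blocks, so the complement points `c + 1` and
`d - 1` (resp. `M + 1` and `m - 1`, or `N` when `m = 1`) are related in `kr(r)` and separate `a`
from `b`. Odd and even positions are both such supports, so the inverse of `K` is the same
construction with their roles exchanged. -/

open Function

namespace IsPartitionOn

variable {S : Set ℕ} {r : ℕ → ℕ → Prop} {i j k : ℕ}

lemma symm (hr : IsPartitionOn S r) : ∀ ⦃i j⦄, r i j → r j i := fun i j => hr.1 i j

lemma trans (hr : IsPartitionOn S r) (hij : r i j) (hjk : r j k) : r i k := hr.2.1 i j k hij hjk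

lemma refl (hr : IsPartitionOn S r) (hi : i ∈ S) : r i i := (hr.2.2 i).2 hi

lemma mem_left (hr : IsPartitionOn S r) (h : r i j) : i ∈ S :=
  (hr.2.2 i).1 (hr.trans h (hr.symm h))

lemma mem_right (hr : IsPartitionOn S r) (h : r i j) : j ∈ S := hr.mem_left (hr.symm h)

end IsPartitionOn

lemma between_comm {i j k : ℕ} : Between i j k ↔ Between j i k := by
  unfold Between; omega

section Kreweras

variable {N : ℕ} {S : Set ℕ} {r : ℕ → ℕ → Prop}

lemma krRel_symm : ∀ ⦃i j⦄, krRel N S r i j → krRel N S r j i := by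
  rintro i j ⟨hi, hj, hiS, hjS, h⟩
  exact ⟨hj, hi, hjS, hiS, fun k l hk hl hbk hbl =>
    h k l hk hl (between_comm.1 hbk) (fun hb => hbl (between_comm.1 hb))⟩

lemma krRel_isPartitionOn (hr : ∀ ⦃i j⦄, r i j → r j i) :
    IsPartitionOn (Idx N \ S) (krRel N S r) := by
  refine ⟨krRel_symm, ?_, fun i => ?_⟩
  · rintro i j k ⟨hi, hj, hiS, hjS, hij⟩ ⟨-, hk, -, hkS, hjk⟩
    refine ⟨hi, hk, hiS, hkS, fun x y hx hy hbx hby hxy => ?_⟩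
    have : x ≠ i ∧ x ≠ j ∧ x ≠ k := by refine ⟨?_, ?_, ?_⟩ <;> rintro rfl <;> contradiction
    -- every `x` between `i` and `k` and `y` outside are separated by `[i, j]` or by `[j, k]`
    have key : (Between i j x ∧ ¬ Between i j y) ∨ (Between j k x ∧ ¬ Between j k y)
        ∨ (Between i j y ∧ ¬ Between i j x) ∨ (Between j k y ∧ ¬ Between j k x) := by
      unfold Between at *; omega
    rcases key with ⟨h, h'⟩ | ⟨h, h'⟩ | ⟨h, h'⟩ | ⟨h, h'⟩
    · exact hij x y hx hy h h' hxy
    · exact hjk x y hx hy h h' hxy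
    · exact hij y x hy hx h h' (hr hxy)
    · exact hjk y x hy hx h h' (hr hxy)
  · refine ⟨fun ⟨hi, _, hiS, _⟩ => ⟨hi, hiS⟩, fun ⟨hi, hiS⟩ => ⟨hi, hi, hiS, hiS, ?_⟩⟩
    intro k l hk _ hbk _ _
    obtain rfl : k = i := by unfold Between at hbk; omega
    exact hiS hk

lemma krRel_nonCrossing (hr : ∀ ⦃i j⦄, r i j → r j i) : NonCrossing (krRel N S r) := by
  rintro i j k l hij hjk hkl ⟨hi, -, hiS, hkS, hik⟩ ⟨hj, -, hjS, hlS, hjl⟩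
  refine ⟨hi, hj, hiS, hjS, fun x y hx hy hbx hby hxy => ?_⟩
  have : x ≠ i ∧ x ≠ j ∧ y ≠ k ∧ y ≠ l := by
    refine ⟨?_, ?_, ?_, ?_⟩ <;> rintro rfl <;> contradiction
  have key : (Between i k x ∧ ¬ Between i k y) ∨ (Between j l y ∧ ¬ Between j l x) := by
    unfold Between at *; omega
  rcases key with ⟨h, h'⟩ | ⟨h, h'⟩
  · exact hik x y hx hy h h' hxy
  · exact hjl y x hy hx h h' (hr hxy)

lemma le_krRel_krRel (hr : IsPartitionOn S r) (hS : S ⊆ Idx N) :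
    RelLE r (krRel N (Idx N \ S) (krRel N S r)) := by
  intro i j hij
  have hi := hr.mem_left hij
  have hj := hr.mem_right hij
  refine ⟨hS hi, hS hj, fun h => h.2 hi, fun h => h.2 hj, ?_⟩
  rintro k l hk hl hbk hbl ⟨-, -, hkS, hlS, hkl⟩
  have : k ≠ i ∧ k ≠ j ∧ l ≠ i ∧ l ≠ j := by
    refine ⟨?_, ?_, ?_, ?_⟩ <;> rintro rfl <;> simp_all
  have key : (Between k l j ∧ ¬ Between k l i) ∨ (Between k l i ∧ ¬ Between k l j) := by
    unfold Between at *; omega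
  rcases key with ⟨h, h'⟩ | ⟨h, h'⟩
  · exact hkl j i hj hi h h' (hr.symm hij)
  · exact hkl i j hi hj h h' hij

lemma krRel_of_saturated {k l : ℕ} (hk : k ∈ Idx N \ S) (hl : l ∈ Idx N \ S) {I : Set ℕ}
    (hI : ∀ x ∈ S, Between k l x ↔ x ∈ I) (hsat : ∀ x y, x ∈ I → r x y → y ∈ I) :
    krRel N S r k l :=
  ⟨hk.1, hl.1, hk.2, hl.2, fun x y hx hy hbx hby hxy =>
    hby ((hI y hy).2 (hsat x y ((hI x hx).1 hbx) hxy))⟩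

structure IsCyclicallySparse (N : ℕ) (S : Set ℕ) : Prop where
  subset : S ⊆ Idx N
  succ_not_mem : ∀ x ∈ S, x + 1 ∉ S
  last_not_mem : 1 ∈ S → N ∉ S

namespace IsCyclicallySparse

variable (hS : IsCyclicallySparse N S) {x : ℕ}
include hS

lemma le_of_mem (hx : x ∈ S) : 1 ≤ x ∧ x ≤ N := hS.subset hx

lemma succ_mem_compl (hx : x ∈ S) (hxN : x < N) : x + 1 ∈ Idx N \ S :=
  ⟨⟨by omega, hxN⟩, hS.succ_not_mem x hx⟩

lemma pred_mem_compl (hx : x ∈ S) (hx2 : 2 ≤ x) : x - 1 ∈ Idx N \ S := by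
  have := hS.le_of_mem hx
  refine ⟨⟨by omega, by omega⟩, fun h => hS.succ_not_mem _ h ?_⟩
  rwa [Nat.sub_add_cancel (by omega)]

lemma last_mem_compl (h1 : 1 ∈ S) : N ∈ Idx N \ S :=
  ⟨⟨(hS.le_of_mem h1).2, le_rfl⟩, hS.last_not_mem h1⟩

end IsCyclicallySparse

lemma exists_block_bounds (hS : S ⊆ Idx N) (hr : IsPartitionOn S r) {a : ℕ} (ha : a ∈ S) :
    ∃ m M, r a m ∧ r a M ∧ ∀ z, r a z → m ≤ z ∧ z ≤ M := by
  have hne : {z | r a z}.Nonempty := ⟨a, hr.refl ha⟩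
  obtain ⟨m, hm, hmin⟩ := BddBelow.exists_isLeast_of_nonempty (OrderBot.bddBelow _) hne
  obtain ⟨M, hM, hmax⟩ := BddAbove.exists_isGreatest_of_nonempty
    ⟨N, fun z hz => (hS (hr.mem_right hz)).2⟩ hne
  exact ⟨m, M, hm, hM, fun z hz => ⟨hmin hz, hmax hz⟩⟩

section NonCrossing

variable (hr : IsPartitionOn S r) (hnc : NonCrossing r)
include hr hnc

lemma lt_and_lt_of_rel {c d x y : ℕ} (hcd : r c d) (hcx : c < x) (hxd : x < d) (hxy : r x y)
    (hncx : ¬ r c x) : c < y ∧ y < d := by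
  have hyc : y ≠ c := by rintro rfl; exact hncx (hr.symm hxy)
  have hyd : y ≠ d := by rintro rfl; exact hncx (hr.trans hcd (hr.symm hxy))
  by_contra hout
  rcases (by omega : y < c ∨ d < y) with hy | hy
  · exact hncx (hr.trans (hr.symm (hnc y c x d hy hcx hxd (hr.symm hxy) hcd)) (hr.symm hxy))
  · exact hncx (hnc c x d y hcx hxd hy hcd hxy)

lemma mem_Icc_of_rel_of_mem_Icc {m M x y : ℕ} (hmM : r m M)
    (hspan : ∀ z, r m z → m ≤ z ∧ z ≤ M) (hx : x ∈ Set.Icc m M) (hxy : r x y) :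
    y ∈ Set.Icc m M := by
  by_cases hmx : r m x
  · exact hspan y (hr.trans hmx hxy)
  · have : x ≠ m ∧ x ≠ M := ⟨by rintro rfl; exact hmx (hr.refl (hr.mem_left hmM)),
      by rintro rfl; exact hmx hmM⟩
    have := lt_and_lt_of_rel hr hnc hmM (by grind) (by grind) hxy hmx
    exact ⟨this.1.le, this.2.le⟩

lemma not_krRel_krRel_of_rel_of_lt (hsp : IsCyclicallySparse N S) {a b e : ℕ} (hb : b ∈ S)
    (hab : a < b) (hrab : ¬ r a b) (hae : r a e) (hbe : b < e) :
    ¬ krRel N (Idx N \ S) (krRel N S r) a b := by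
  obtain ⟨c, ⟨hac, hcb⟩, hcmax⟩ := BddAbove.exists_isGreatest_of_nonempty
    (S := {x | r a x ∧ x < b}) ⟨b, fun x hx => hx.2.le⟩ ⟨a, hr.refl (hr.mem_left hae), hab⟩
  obtain ⟨d, ⟨had, hbd⟩, hdmin⟩ := BddBelow.exists_isLeast_of_nonempty
    (OrderBot.bddBelow {x | r a x ∧ b < x}) ⟨e, hae, hbe⟩
  have hacle : a ≤ c := hcmax ⟨hr.refl (hr.mem_left hae), hab⟩
  have hgap : ∀ x, c < x → x < d → ¬ r c x := by
    intro x hcx hxd hrcx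
    have hax := hr.trans hac hrcx
    rcases lt_trichotomy x b with h | rfl | h
    · exact absurd (hcmax ⟨hax, h⟩) (by omega)
    · exact hrab hax
    · exact absurd (hdmin ⟨hax, h⟩) (by omega)
  have hbN := hsp.le_of_mem hb
  have hk := hsp.succ_mem_compl (hr.mem_right hac) (by omega)
  have hl := hsp.pred_mem_compl (hr.mem_right had) (by omega)
  have hlb : d - 1 ≠ b := fun h => hl.2 (h ▸ hb)
  refine fun h => h.2.2.2.2 (c + 1) (d - 1) hk hl (by unfold Between; omega)
    (by unfold Between; omega) (krRel_of_saturated hk hl (I := Set.Ioo c d) ?_ ?_)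
  · intro x _
    simp only [Between, Set.mem_Ioo]
    omega
  · rintro x y ⟨hcx, hxd⟩ hxy
    exact lt_and_lt_of_rel hr hnc (hr.trans (hr.symm hac) had) hcx hxd hxy (hgap x hcx hxd)

lemma not_krRel_krRel_of_forall_lt (hsp : IsCyclicallySparse N S) {a b : ℕ} (ha : a ∈ S)
    (hb : b ∈ S) (hab : a < b) (hbelow : ∀ z, r a z → z < b) :
    ¬ krRel N (Idx N \ S) (krRel N S r) a b := by
  obtain ⟨m, M, ham, haM, hspan⟩ := exists_block_bounds hsp.subset hr ha
  have hsat : ∀ x y, x ∈ Set.Icc m M → r x y → y ∈ Set.Icc m M := fun x y =>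
    mem_Icc_of_rel_of_mem_Icc hr hnc (hr.trans (hr.symm ham) haM)
      (fun z h => hspan z (hr.trans ham h))
  have hMb := hbelow M haM
  have hma := hspan a (hr.refl ha)
  have hm1 := (hsp.le_of_mem (hr.mem_right ham)).1
  have hbN := hsp.le_of_mem hb
  have hk := hsp.succ_mem_compl (hr.mem_right haM) (by omega)
  intro h
  by_cases hm2 : 2 ≤ m
  · have hl := hsp.pred_mem_compl (hr.mem_right ham) hm2
    refine h.2.2.2.2 (M + 1) (m - 1) hk hl (by unfold Between; omega) (by unfold Between; omega)
      (krRel_of_saturated hk hl (I := Set.Icc m M) (fun x hx => ?_) hsat)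
    have : x ≠ M + 1 ∧ x ≠ m - 1 := ⟨fun h => hk.2 (h ▸ hx), fun h => hl.2 (h ▸ hx)⟩
    simp only [Between, Set.mem_Icc]
    omega
  · obtain rfl : m = 1 := by omega
    have hl := hsp.last_mem_compl (hr.mem_right ham)
    have hbN_ne : b ≠ N := fun h => hl.2 (h ▸ hb)
    -- the block of `a` spans `[1, M]`, so `[M + 1, N]` is cut off from it cyclically
    refine h.2.2.2.2 (M + 1) N hk hl (by unfold Between; omega) (by unfold Between; omega)
      (krRel_of_saturated hk hl (I := (Set.Icc 1 M)ᶜ) (fun x hx => ?_)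
        fun x y hx hxy hy => hx (hsat y x hy (hr.symm hxy)))
    have := hsp.le_of_mem hx
    simp only [Between, Set.mem_compl_iff, Set.mem_Icc]
    omega

lemma krRel_krRel_le (hsp : IsCyclicallySparse N S) :
    RelLE (krRel N (Idx N \ S) (krRel N S r)) r := by
  suffices h : ∀ a b, a < b → krRel N (Idx N \ S) (krRel N S r) a b → r a b by
    intro a b hab
    rcases lt_trichotomy a b with hlt | rfl | hgt
    · exact h a b hlt hab
    · exact hr.refl (by by_contra ha; exact hab.2.2.1 ⟨hab.1, ha⟩)
    · exact hr.symm (h b a hgt (krRel_symm hab))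
  intro a b hab h
  have ha : a ∈ S := by by_contra ha; exact h.2.2.1 ⟨h.1, ha⟩
  have hb : b ∈ S := by by_contra hb; exact h.2.2.2.1 ⟨h.2.1, hb⟩
  by_contra hrab
  by_cases hgap : ∃ e, r a e ∧ b < e
  · obtain ⟨e, hae, hbe⟩ := hgap
    exact not_krRel_krRel_of_rel_of_lt hr hnc hsp hb hab hrab hae hbe h
  · refine not_krRel_krRel_of_forall_lt hr hnc hsp ha hb hab (fun z hz => ?_) h
    have : z ≠ b := by rintro rfl; exact hrab hz
    grind

theorem krRel_krRel_eq (hsp : IsCyclicallySparse N S) :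
    krRel N (Idx N \ S) (krRel N S r) = r :=
  funext fun i => funext fun j =>
    propext ⟨krRel_krRel_le hr hnc hsp i j, le_krRel_krRel hr hsp.subset i j⟩

end NonCrossing

end Kreweras

section Transport

variable {f : ℕ → ℕ} {p : ℕ → ℕ → Prop}

lemma mapRel_apply_iff (hf : Injective f) {i j : ℕ} : mapRel f p (f i) (f j) ↔ p i j :=
  ⟨fun ⟨_, _, hi, hj, h⟩ => hf hi ▸ hf hj ▸ h, fun h => ⟨i, j, rfl, rfl, h⟩⟩

lemma onFun_mapRel (hf : Injective f) : (mapRel f p on f) = p :=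
  funext fun _ => funext fun _ => propext (mapRel_apply_iff hf)

lemma mapRel_onFun {Q : ℕ → ℕ → Prop} (hQ : ∀ a b, Q a b → a ∈ Set.range f ∧ b ∈ Set.range f) :
    mapRel f (Q on f) = Q := by
  funext a b
  refine propext ⟨fun ⟨i, j, hi, hj, h⟩ => hi ▸ hj ▸ h, fun h => ?_⟩
  obtain ⟨⟨i, rfl⟩, ⟨j, rfl⟩⟩ := hQ a b h
  exact ⟨i, j, rfl, rfl, h⟩

lemma mapRel_symm (hp : ∀ ⦃i j⦄, p i j → p j i) : ∀ ⦃a b⦄, mapRel f p a b → mapRel f p b a :=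
  fun _ _ ⟨i, j, hi, hj, h⟩ => ⟨j, i, hj, hi, hp h⟩

lemma IsPartitionOn.mapRel {S : Set ℕ} (hp : IsPartitionOn S p) (hf : Injective f) :
    IsPartitionOn (f '' S) (mapRel f p) := by
  refine ⟨mapRel_symm hp.symm, ?_, fun a => ?_⟩
  · rintro - - - ⟨i, j, rfl, rfl, hij⟩ ⟨j', k, hj', rfl, hjk⟩
    exact ⟨i, k, rfl, rfl, hp.trans hij (hf hj' ▸ hjk)⟩
  · refine ⟨fun ⟨i, _, hi, _, h⟩ => ⟨i, hp.mem_left h, hi⟩, ?_⟩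
    rintro ⟨i, hi, rfl⟩
    exact ⟨i, i, rfl, rfl, hp.refl hi⟩

lemma NonCrossing.mapRel (hnc : NonCrossing p) (hf : StrictMono f) :
    NonCrossing (mapRel f p) := by
  rintro - - - - h₁ h₂ h₃ ⟨i, k, rfl, rfl, hik⟩ ⟨j, l, rfl, rfl, hjl⟩
  exact ⟨i, j, rfl, rfl, hnc i j k l (hf.lt_iff_lt.1 h₁) (hf.lt_iff_lt.1 h₂)
    (hf.lt_iff_lt.1 h₃) hik hjl⟩

lemma IsPartitionOn.onFun {T : Set ℕ} {Q : ℕ → ℕ → Prop} (hQ : IsPartitionOn T Q) :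
    IsPartitionOn (f ⁻¹' T) (Q on f) :=
  ⟨fun _ _ h => hQ.symm h, fun _ _ _ => hQ.trans, fun i => hQ.2.2 (f i)⟩

lemma NonCrossing.onFun {Q : ℕ → ℕ → Prop} (hnc : NonCrossing Q) (hf : StrictMono f) :
    NonCrossing (Q on f) :=
  fun _ _ _ _ h₁ h₂ h₃ => hnc _ _ _ _ (hf h₁) (hf h₂) (hf h₃)

def krTransport (N : ℕ) (A : Set ℕ) (f g : ℕ → ℕ) (p : ℕ → ℕ → Prop) : ℕ → ℕ → Prop :=
  krRel N (f '' A) (mapRel f p) on g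

variable {N : ℕ} {A : Set ℕ} {g : ℕ → ℕ}

lemma krTransport_isPartitionOn (hg : Injective g) (hcompl : Idx N \ f '' A = g '' A)
    (hp : ∀ ⦃i j⦄, p i j → p j i) : IsPartitionOn A (krTransport N A f g p) := by
  have := (krRel_isPartitionOn (N := N) (S := f '' A) (mapRel_symm (f := f) hp)).onFun (f := g)
  rwa [hcompl, Set.preimage_image_eq _ hg] at this

lemma krTransport_nonCrossing (hg : StrictMono g) (hp : ∀ ⦃i j⦄, p i j → p j i) :
    NonCrossing (krTransport N A f g p) :=
  (krRel_nonCrossing (mapRel_symm hp)).onFun hg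

lemma krTransport_krTransport (hf : StrictMono f) (hsp : IsCyclicallySparse N (f '' A))
    (hcompl : Idx N \ f '' A = g '' A) (hp : IsPartitionOn A p) (hnc : NonCrossing p) :
    krTransport N A g f (krTransport N A f g p) = p := by
  have hsupp : ∀ a b, krRel N (f '' A) (mapRel f p) a b → a ∈ Set.range g ∧ b ∈ Set.range g :=
    fun a b h => ⟨Set.image_subset_range g A (hcompl ▸ ⟨h.1, h.2.2.1⟩),
      Set.image_subset_range g A (hcompl ▸ ⟨h.2.1, h.2.2.2.1⟩)⟩
  unfold krTransport
  rw [mapRel_onFun hsupp, ← hcompl,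
    krRel_krRel_eq (hp.mapRel hf.injective) (hnc.mapRel hf) hsp, onFun_mapRel hf.injective]

end Transport

section OddEven

lemma strictMono_oddPos : StrictMono oddPos := fun i j h => by unfold oddPos; omega

lemma strictMono_evenPos : StrictMono evenPos := fun i j h => by unfold evenPos; omega

variable {n x : ℕ}

lemma mem_Idx : x ∈ Idx n ↔ 1 ≤ x ∧ x ≤ n := Iff.rfl

lemma mem_image_oddPos : x ∈ oddPos '' Idx n ↔ x % 2 = 1 ∧ x ≤ 2 * n := by
  refine ⟨?_, fun h => ⟨(x + 1) / 2, ⟨by omega, by omega⟩, by unfold oddPos; omega⟩⟩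
  rintro ⟨i, ⟨hi1, hin⟩, rfl⟩
  unfold oddPos; omega

lemma mem_image_evenPos : x ∈ evenPos '' Idx n ↔ x % 2 = 0 ∧ 1 ≤ x ∧ x ≤ 2 * n := by
  refine ⟨?_, fun h => ⟨x / 2, ⟨by omega, by omega⟩, by unfold evenPos; omega⟩⟩
  rintro ⟨i, ⟨hi1, hin⟩, rfl⟩
  unfold evenPos; omega

lemma Idx_diff_image_oddPos : Idx (2 * n) \ oddPos '' Idx n = evenPos '' Idx n := by
  ext x
  simp only [Set.mem_sdiff, mem_Idx, mem_image_oddPos, mem_image_evenPos]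
  omega

lemma Idx_diff_image_evenPos : Idx (2 * n) \ evenPos '' Idx n = oddPos '' Idx n := by
  ext x
  simp only [Set.mem_sdiff, mem_Idx, mem_image_oddPos, mem_image_evenPos]
  omega

lemma isCyclicallySparse_image_oddPos : IsCyclicallySparse (2 * n) (oddPos '' Idx n) where
  subset x hx := by rw [mem_image_oddPos] at hx; exact ⟨by omega, hx.2⟩
  succ_not_mem x hx := by rw [mem_image_oddPos] at hx ⊢; omega
  last_not_mem _ := by rw [mem_image_oddPos]; omega

lemma isCyclicallySparse_image_evenPos : IsCyclicallySparse (2 * n) (evenPos '' Idx n) where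
  subset x hx := by rw [mem_image_evenPos] at hx; exact hx.2
  succ_not_mem x hx := by rw [mem_image_evenPos] at hx ⊢; omega
  last_not_mem h := by rw [mem_image_evenPos] at h; omega

end OddEven

/-- for every `p ∈ NC(n)`, `K(p)` is again a non-crossing
partition of `[n]`, and `K : NC(n) → NC(n)` is a bijection. -/
theorem Kmap_bijOn (n : ℕ) :
    (∀ p : ℕ → ℕ → Prop, IsPartitionOn (Idx n) p → NonCrossing p →
      IsPartitionOn (Idx n) (Kmap n p) ∧ NonCrossing (Kmap n p)) ∧
    Set.BijOn (Kmap n)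
      {p : ℕ → ℕ → Prop | IsPartitionOn (Idx n) p ∧ NonCrossing p}
      {p : ℕ → ℕ → Prop | IsPartitionOn (Idx n) p ∧ NonCrossing p} := by
  have hK : Kmap n = krTransport (2 * n) (Idx n) oddPos evenPos := rfl
  set K' := krTransport (2 * n) (Idx n) evenPos oddPos
  have mem_NC : ∀ p, IsPartitionOn (Idx n) p →
      IsPartitionOn (Idx n) (Kmap n p) ∧ NonCrossing (Kmap n p) := fun p hp =>
    ⟨krTransport_isPartitionOn strictMono_evenPos.injective Idx_diff_image_oddPos hp.symm,
      krTransport_nonCrossing strictMono_evenPos hp.symm⟩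
  have mem_NC' : ∀ q, IsPartitionOn (Idx n) q →
      IsPartitionOn (Idx n) (K' q) ∧ NonCrossing (K' q) := fun q hq =>
    ⟨krTransport_isPartitionOn strictMono_oddPos.injective Idx_diff_image_evenPos hq.symm,
      krTransport_nonCrossing strictMono_oddPos hq.symm⟩
  refine ⟨fun p hp _ => mem_NC p hp,
    Set.InvOn.bijOn ⟨fun p hp => ?_, fun q hq => ?_⟩ (fun p hp => mem_NC p hp.1)
      (fun q hq => mem_NC' q hq.1)⟩
  · exact hK ▸ krTransport_krTransport strictMono_oddPos isCyclicallySparse_image_oddPos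
      Idx_diff_image_oddPos hp.1 hp.2
  · exact hK ▸ krTransport_krTransport strictMono_evenPos isCyclicallySparse_image_evenPos
      Idx_diff_image_evenPos hq.1 hq.2

end NCPaper
end

section
/- Let p be a non-crossing partition of [n], let B and B′ be adjacent blocks with d_p(B) < d_p(B′), and let p′ = p_{B,B′} be the non-crossing partition obtained by merging B and B′. Then d_{p′}(B∪B′) = d_p(B), and every block B″ of p other than B and B′ with d_p(B″) < d_p(B) satisfies d_{p′}(B″) ≤ d_p(B″). -/
/-!
Adjacency forces the deeper block `B'` to lie strictly inside the span of `B`. Indeed, if `B`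
lay inside `B'` we would have `d(B) > d(B')`; if the spans were disjoint, non-crossingness of the
merged partition would make every block enclosing `B'` enclose `B` too, whence `d(B) ≥ d(B')`.
So `B ∪ B'` has the same first and last element as `B`, and chains of blocks transfer between
`p` and `p_{B,B'}` by exchanging `B` and `B ∪ B'`.
-/

namespace NCPaper

section Blocks

variable {S : Set ℕ} {r : ℕ → ℕ → Prop} {C D : Set ℕ} {i j : ℕ}

lemma IsBlock.nonempty (hC : IsBlock r C) : C.Nonempty := by
  obtain ⟨i, hi, rfl⟩ := hC
  exact ⟨i, hi⟩

lemma IsBlock.eq_setOf_rel (hr : IsPartitionOn S r) (hC : IsBlock r C) (hi : i ∈ C) :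
    C = {j | r i j} := by
  obtain ⟨k, -, rfl⟩ := hC
  ext j
  exact ⟨fun h => hr.2.1 _ _ _ (hr.1 _ _ hi) h, fun h => hr.2.1 _ _ _ hi h⟩

lemma IsBlock.rel (hr : IsPartitionOn S r) (hC : IsBlock r C) (hi : i ∈ C) (hj : j ∈ C) :
    r i j := by
  rw [hC.eq_setOf_rel hr hi] at hj
  exact hj

lemma IsBlock.mem_of_rel (hr : IsPartitionOn S r) (hC : IsBlock r C) (hi : i ∈ C)
    (hij : r i j) : j ∈ C := by
  rw [hC.eq_setOf_rel hr hi]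
  exact hij

lemma IsBlock.eq_of_mem (hr : IsPartitionOn S r) (hC : IsBlock r C) (hD : IsBlock r D)
    (hiC : i ∈ C) (hiD : i ∈ D) : C = D := by
  rw [hC.eq_setOf_rel hr hiC, hD.eq_setOf_rel hr hiD]

lemma IsBlock.subset (hr : IsPartitionOn S r) (hC : IsBlock r C) : C ⊆ S :=
  fun j hj => (hr.2.2 j).1 (hC.rel hr hj hj)

end Blocks

section Spans

variable {n : ℕ} {r : ℕ → ℕ → Prop} {C D : Set ℕ}

lemma IsBlock.bddAbove (hr : IsPartitionOn (Idx n) r) (hC : IsBlock r C) : BddAbove C :=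
  ⟨n, fun _ hj => (hC.subset hr hj).2⟩

lemma IsBlock.sInf_mem (hC : IsBlock r C) : sInf C ∈ C :=
  Nat.sInf_mem hC.nonempty

lemma IsBlock.sSup_mem (hr : IsPartitionOn (Idx n) r) (hC : IsBlock r C) : sSup C ∈ C :=
  Nat.sSup_mem hC.nonempty (hC.bddAbove hr)

lemma IsBlock.sInf_le_sSup (hr : IsPartitionOn (Idx n) r) (hC : IsBlock r C) :
    sInf C ≤ sSup C :=
  Nat.sInf_le (hC.sSup_mem hr)

lemma IsBlock.sInf_union (hC : IsBlock r C) (hD : IsBlock r D) :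
    sInf (C ∪ D) = min (sInf C) (sInf D) :=
  csInf_union (OrderBot.bddBelow C) hC.nonempty (OrderBot.bddBelow D) hD.nonempty

lemma IsBlock.sSup_union (hr : IsPartitionOn (Idx n) r) (hC : IsBlock r C)
    (hD : IsBlock r D) : sSup (C ∪ D) = max (sSup C) (sSup D) :=
  csSup_union (hC.bddAbove hr) hC.nonempty (hD.bddAbove hr) hD.nonempty

lemma span_trichotomy (hr : IsPartitionOn (Idx n) r) (hnc : NonCrossing r)
    (hC : IsBlock r C) (hD : IsBlock r D) (hne : C ≠ D) :
    sSup C < sInf D ∨ sSup D < sInf C ∨ Nested C D ∨ Nested D C := by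
  have ne_of_mem : ∀ {x y}, x ∈ C → y ∈ D → x ≠ y := fun hx hy hxy =>
    hne (hC.eq_of_mem hr hD hx (hxy ▸ hy))
  have not_crossing : ∀ {X Y : Set ℕ}, IsBlock r X → IsBlock r Y → X ≠ Y →
      ¬ (sInf X < sInf Y ∧ sInf Y < sSup X ∧ sSup X < sSup Y) := by
    rintro X Y hX hY hXY ⟨h₁, h₂, h₃⟩
    have := hnc _ _ _ _ h₁ h₂ h₃ (hX.rel hr hX.sInf_mem (hX.sSup_mem hr))
      (hY.rel hr hY.sInf_mem (hY.sSup_mem hr))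
    exact hXY (hX.eq_of_mem hr hY (hX.mem_of_rel hr hX.sInf_mem this) hY.sInf_mem)
  have := ne_of_mem hC.sInf_mem hD.sInf_mem
  have := ne_of_mem hC.sInf_mem (hD.sSup_mem hr)
  have := ne_of_mem (hC.sSup_mem hr) hD.sInf_mem
  have := ne_of_mem (hC.sSup_mem hr) (hD.sSup_mem hr)
  have := hC.sInf_le_sSup hr
  have := hD.sInf_le_sSup hr
  have := not_crossing hC hD hne
  have := not_crossing hD hC hne.symm
  unfold Nested
  omega

end Spans

section Chains

def IsNestedChain (p : ℕ → ℕ → Prop) (c : ℕ → Set ℕ) (m : ℕ) : Prop :=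
  (∀ i, 1 ≤ i → i ≤ m → IsBlock p (c i)) ∧ (∀ i, 1 ≤ i → i < m → Nested (c i) (c (i + 1)))

variable {p q : ℕ → ℕ → Prop} {c : ℕ → Set ℕ} {m : ℕ} {C D E E' : Set ℕ}

lemma IsNestedChain.sInf_add_le (hc : IsNestedChain p c m) :
    ∀ i, 1 ≤ i → i ≤ m → sInf (c i) + i ≤ sInf (c 1) + 1
  | 0, h, _ => absurd h (by omega)
  | 1, _, _ => le_rfl
  | i + 2, _, h => by
    have hlt : sInf (c (i + 2)) < sInf (c (i + 1)) := (hc.2 (i + 1) (by omega) (by omega)).1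
    have := hc.sInf_add_le (i + 1) (by omega) (by omega)
    omega

lemma bddAbove_chainLengths (p : ℕ → ℕ → Prop) (C : Set ℕ) :
    BddAbove {m | ∃ c : ℕ → Set ℕ, c 1 = C ∧ IsNestedChain p c m} := by
  refine ⟨sInf C + 1, ?_⟩
  rintro (_ | m) ⟨c, rfl, hc⟩
  · exact Nat.zero_le _
  · exact le_of_add_le_right (hc.sInf_add_le (m + 1) (by omega) le_rfl)

lemma exists_nestedChain_depth (p : ℕ → ℕ → Prop) (C : Set ℕ) :
    ∃ c : ℕ → Set ℕ, c 1 = C ∧ IsNestedChain p c (depth p C) :=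
  Nat.sSup_mem (s := {m | ∃ c : ℕ → Set ℕ, c 1 = C ∧ IsNestedChain p c m})
    ⟨0, fun _ => C, rfl, fun _ _ h => by omega, fun _ _ h => by omega⟩
    (bddAbove_chainLengths p C)

lemma le_depth (hc1 : c 1 = C) (hc : IsNestedChain p c m) : m ≤ depth p C :=
  le_csSup (bddAbove_chainLengths p C) ⟨c, hc1, hc⟩

lemma depth_add_one_le_of_nested (hC : IsBlock p C) (hCD : Nested C D) :
    depth p D + 1 ≤ depth p C := by
  obtain ⟨c, hc1, hblock, hnest⟩ := exists_nestedChain_depth p D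
  refine le_depth (c := fun i => if i = 1 then C else c (i - 1)) (if_pos rfl)
    ⟨fun i h₁ h₂ => ?_, fun i h₁ h₂ => ?_⟩
  · rcases eq_or_ne i 1 with rfl | hi
    · simpa using hC
    · simpa [hi] using hblock (i - 1) (by omega) (by omega)
  · rcases eq_or_ne i 1 with rfl | hi
    · simpa [hc1] using hCD
    · have := hnest (i - 1) (by omega) (by omega)
      rw [Nat.sub_add_cancel h₁] at this
      simpa [hi, show i ≠ 0 by omega] using this

lemma depth_le_depth_of_forall_nested (hD : IsBlock p D)
    (h : ∀ X, IsBlock p X → Nested C X → Nested D X) : depth p C ≤ depth p D := by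
  obtain ⟨c, hc1, hblock, hnest⟩ := exists_nestedChain_depth p C
  refine le_depth (c := Function.update c 1 D) (by simp) ⟨fun i h₁ h₂ => ?_, fun i h₁ h₂ => ?_⟩
  · rcases eq_or_ne i 1 with rfl | hi
    · simpa using hD
    · simpa [hi] using hblock i h₁ h₂
  · have hi : i + 1 ≠ 1 := by omega
    rcases eq_or_ne i 1 with rfl | hi'
    · simpa using h _ (hblock 2 le_add_self h₂) (hc1 ▸ hnest 1 le_rfl h₂)
    · rw [Function.update_of_ne hi', Function.update_of_ne hi]
      exact hnest i h₁ h₂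

/-- `Nested` only sees first and last elements, and every block of a chain starting at `C`
begins weakly left of `C`. -/
lemma depth_le_depth_of_replace (hinf : sInf E' = sInf E) (hsup : sSup E' = sSup E)
    (hblock : ∀ X, IsBlock p X → sInf X ≤ sInf C → IsBlock q (if X = E then E' else X)) :
    depth p C ≤ depth q (if C = E then E' else C) := by
  obtain ⟨c, rfl, hc⟩ := exists_nestedChain_depth p C
  have hext : ∀ X, sInf (if X = E then E' else X) = sInf X ∧
      sSup (if X = E then E' else X) = sSup X := by
    intro X
    split_ifs with h
    · exact h ▸ ⟨hinf, hsup⟩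
    · exact ⟨rfl, rfl⟩
  refine le_depth (c := fun i => if c i = E then E' else c i) rfl
    ⟨fun i h₁ h₂ => hblock _ (hc.1 i h₁ h₂) ?_, fun i h₁ h₂ => ?_⟩
  · have := hc.sInf_add_le i h₁ h₂
    omega
  · obtain ⟨hlt, hlt'⟩ := hc.2 i h₁ h₂
    exact ⟨by rwa [(hext _).1, (hext _).1], by rwa [(hext _).2, (hext _).2]⟩

end Chains

section Merge

variable {S : Set ℕ} {p : ℕ → ℕ → Prop} {B B' C : Set ℕ} {i j : ℕ}

lemma mem_union_of_rel (hp : IsPartitionOn S p) (hB : IsBlock p B) (hB' : IsBlock p B')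
    (hi : i ∈ B ∪ B') (hij : p i j) : j ∈ B ∪ B' :=
  hi.imp (fun h => hB.mem_of_rel hp h hij) (fun h => hB'.mem_of_rel hp h hij)

lemma mergeRel_isPartitionOn (hp : IsPartitionOn S p) (hB : IsBlock p B) (hB' : IsBlock p B') :
    IsPartitionOn S (mergeRel p B B') := by
  have refl_of_rel : ∀ {i j}, p i j → p j j := fun h => hp.2.1 _ _ _ (hp.1 _ _ h) h
  refine ⟨?_, ?_, fun i => ⟨fun h => (hp.2.2 i).1 (h.elim id And.left),
    fun h => Or.inl ((hp.2.2 i).2 h)⟩⟩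
  · rintro i j (h | ⟨hi, hj, hiB, hjB⟩)
    exacts [Or.inl (hp.1 _ _ h), Or.inr ⟨hj, hi, hjB, hiB⟩]
  · rintro i j k (hij | ⟨hi, -, hiB, hjB⟩) (hjk | ⟨-, hk, hjB, hkB⟩)
    · exact Or.inl (hp.2.1 _ _ _ hij hjk)
    · exact Or.inr ⟨refl_of_rel (hp.1 _ _ hij), hk,
        mem_union_of_rel hp hB hB' hjB (hp.1 _ _ hij), hkB⟩
    · exact Or.inr ⟨hi, refl_of_rel hjk, hiB, mem_union_of_rel hp hB hB' hjB hjk⟩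
    · exact Or.inr ⟨hi, hk, hiB, hkB⟩

lemma setOf_mergeRel_of_mem (hp : IsPartitionOn S p) (hB : IsBlock p B) (hB' : IsBlock p B')
    (hi : i ∈ B ∪ B') : {j | mergeRel p B B' i j} = B ∪ B' := by
  have refl_of_mem : ∀ {k}, k ∈ B ∪ B' → p k k := by
    rintro k (hk | hk)
    exacts [hB.rel hp hk hk, hB'.rel hp hk hk]
  ext j
  refine ⟨?_, fun hj => Or.inr ⟨refl_of_mem hi, refl_of_mem hj, hi, hj⟩⟩
  rintro (hij | ⟨-, -, -, hj⟩)
  exacts [mem_union_of_rel hp hB hB' hi hij, hj]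

lemma setOf_mergeRel_of_not_mem (hi : i ∉ B ∪ B') :
    {j | mergeRel p B B' i j} = {j | p i j} := by
  ext j
  simp [mergeRel, hi]

lemma isBlock_mergeRel_iff (hp : IsPartitionOn S p) (hB : IsBlock p B) (hB' : IsBlock p B') :
    IsBlock (mergeRel p B B') C ↔ C = B ∪ B' ∨ (IsBlock p C ∧ C ≠ B ∧ C ≠ B') := by
  constructor
  · rintro ⟨i, hii, rfl⟩
    by_cases hi : i ∈ B ∪ B'
    · exact Or.inl (setOf_mergeRel_of_mem hp hB hB' hi)
    · have hpii : p i i := hii.elim id And.left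
      rw [setOf_mergeRel_of_not_mem hi]
      exact Or.inr ⟨⟨i, hpii, rfl⟩, fun h => hi (Or.inl (h ▸ hpii)),
        fun h => hi (Or.inr (h ▸ hpii))⟩
  · rintro (rfl | ⟨hC, hCB, hCB'⟩)
    · obtain ⟨i, hi⟩ := hB.nonempty
      exact ⟨i, Or.inl (hB.rel hp hi hi), (setOf_mergeRel_of_mem hp hB hB' (Or.inl hi)).symm⟩
    · obtain ⟨i, hi⟩ := hC.nonempty
      have hiBB' : i ∉ B ∪ B' := by
        rintro (h | h)
        exacts [hCB (hC.eq_of_mem hp hB hi h), hCB' (hC.eq_of_mem hp hB' hi h)]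
      refine ⟨i, Or.inl (hC.rel hp hi hi), ?_⟩
      rw [setOf_mergeRel_of_not_mem hiBB']
      exact hC.eq_setOf_rel hp hi

end Merge

section Adjacent

variable {n : ℕ} {p : ℕ → ℕ → Prop} {B B' : Set ℕ}

/-- Otherwise `X` would cross the merged block `B ∪ B'`. -/
lemma Adjacent.nested_of_separated (hp : IsPartitionOn (Idx n) p) (hadj : Adjacent p B B')
    (hsep : sSup B < sInf B' ∨ sSup B' < sInf B) {X : Set ℕ} (hX : IsBlock p X)
    (hB'X : Nested B' X) : Nested B X := by
  obtain ⟨hB, hB', -, hqnc⟩ := hadj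
  have hinf := hB.sInf_union hB'
  have hsup := hB.sSup_union hp hB'
  have := hB.sInf_le_sSup hp
  have := hB'.sInf_le_sSup hp
  unfold Nested at *
  have hXB : X ≠ B := by rintro rfl; omega
  have hXB' : X ≠ B' := by rintro rfl; omega
  have hXU : X ≠ B ∪ B' := by rintro rfl; omega
  have hXq := (isBlock_mergeRel_iff hp hB hB').2 (Or.inr ⟨hX, hXB, hXB'⟩)
  have hUq := (isBlock_mergeRel_iff (C := B ∪ B') hp hB hB').2 (Or.inl rfl)
  rcases span_trichotomy (mergeRel_isPartitionOn hp hB hB') hqnc hXq hUq hXU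
    with h | h | ⟨h, h'⟩ | ⟨h, h'⟩ <;> omega

lemma Adjacent.nested_of_depth_lt (hp : IsPartitionOn (Idx n) p) (hnc : NonCrossing p)
    (hadj : Adjacent p B B') (hd : depth p B < depth p B') : Nested B' B := by
  obtain hsep | hBB' | hB'B := or_assoc.2 (span_trichotomy hp hnc hadj.1 hadj.2.1 hadj.2.2.1)
  · have := depth_le_depth_of_forall_nested hadj.1 fun X hX =>
      hadj.nested_of_separated hp hsep hX
    omega
  · have := depth_add_one_le_of_nested hadj.1 hBB'
    omega
  · exact hB'B

end Adjacent

/-- merging an adjacent block `B'` of larger depth into `B`: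
the merged block has depth `d_p(B)` in `p_{B,B'}`, and every other block of
depth smaller than `d_p(B)` does not gain depth. -/
theorem depth_mergeRel
    (n : ℕ) (p : ℕ → ℕ → Prop)
    (hp : IsPartitionOn (Idx n) p) (hnc : NonCrossing p)
    (B B' : Set ℕ) (hadj : Adjacent p B B') (hd : depth p B < depth p B') :
    depth (mergeRel p B B') (B ∪ B') = depth p B ∧
    (∀ B'' : Set ℕ, IsBlock p B'' → B'' ≠ B → B'' ≠ B' →
      depth p B'' < depth p B → depth (mergeRel p B B') B'' ≤ depth p B'') := by
  have hB'B : Nested B' B := hadj.nested_of_depth_lt hp hnc hd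
  obtain ⟨hB, hB', -, -⟩ := hadj
  have hblock := fun C => isBlock_mergeRel_iff (C := C) hp hB hB'
  have hinf : sInf (B ∪ B') = sInf B := by
    rw [hB.sInf_union hB']
    exact min_eq_left hB'B.1.le
  have hsup : sSup (B ∪ B') = sSup B := by
    rw [hB.sSup_union hp hB']
    exact max_eq_left hB'B.2.le
  have unmerge : ∀ C, depth (mergeRel p B B') C ≤ depth p (if C = B ∪ B' then B else C) :=
    fun C => depth_le_depth_of_replace hinf.symm hsup.symm fun X hX _ => by
      split_ifs with h
      exacts [hB, (((hblock X).1 hX).resolve_left h).1]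
  refine ⟨le_antisymm (by simpa using unmerge (B ∪ B')) ?_, fun B'' hB'' hB''B _ _ => ?_⟩
  · simpa using depth_le_depth_of_replace (q := mergeRel p B B') (C := B) hinf hsup fun X hX hXB => by
      split_ifs with h
      · exact (hblock _).2 (Or.inl rfl)
      · exact (hblock X).2 (Or.inr ⟨hX, h, by rintro rfl; exact absurd hB'B.1 (by omega)⟩)
  · have hB''U : B'' ≠ B ∪ B' := fun h =>
      hB''B (hB''.eq_of_mem hp hB (h ▸ Or.inl hB.sInf_mem) hB.sInf_mem)
    simpa [hB''U] using unmerge B''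

end NCPaper
end

section
/- Let p be a non-crossing partition of [n], B a block of p, 1 ≤ i < |B|, and let p′ = p_{B,i} be the partition obtained by splitting B into the block B₁ of its i smallest elements and the block B₂ of its remaining elements. Then p′ is non-crossing, d_{p′}(B₁) = d_{p′}(B₂) = d_p(B), and every block B′ of p other than B satisfies d_{p′}(B′) ≤ d_p(B′). -/
namespace NCPaper

/-! `p_{B,i}` is non-crossing because `p` is and every element of `B₁` precedes every element
of `B₂`: an element of `B` between two elements of `B₁`, or after one of `B₂`, lies in that part.
For depths, a block `X ≠ B` of `p` encloses `B` as soon as it encloses a nonempty part of `B`: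
otherwise the extreme elements of `X` and `B` would cross. So collapsing `B₁` and `B₂` back to
`B` turns chains of `p_{B,i}` into chains of `p`, and replacing the first block `B` of a chain
of `p` by `B₁` or `B₂` turns it into a chain of `p_{B,i}`. -/

section Blocks

variable {S B X Y : Set ℕ} {p : ℕ → ℕ → Prop}

theorem IsPartitionOn.rel_iff_mem (hp : IsPartitionOn S p) (hB : IsBlock p B) {x y : ℕ}
    (hx : x ∈ B) : p x y ↔ y ∈ B := by
  obtain ⟨u, -, rfl⟩ := hB
  exact ⟨hp.2.1 u x y hx, hp.2.1 x u y (hp.1 u x hx)⟩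

theorem IsPartitionOn.block_eq_of_mem (hp : IsPartitionOn S p) (hX : IsBlock p X)
    (hY : IsBlock p Y) {x : ℕ} (hxX : x ∈ X) (hxY : x ∈ Y) : X = Y := by
  ext y
  rw [← hp.rel_iff_mem hX hxX, ← hp.rel_iff_mem hY hxY]

theorem IsPartitionOn.block_subset (hp : IsPartitionOn S p) (hB : IsBlock p B) : B ⊆ S := by
  obtain ⟨u, -, rfl⟩ := hB
  exact fun j hj => (hp.2.2 j).1 (hp.2.1 j u j (hp.1 u j hj) hj)

theorem IsBlock.nonempty_s10 (hB : IsBlock p B) : B.Nonempty := by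
  obtain ⟨u, hu, rfl⟩ := hB
  exact ⟨u, hu⟩

theorem IsPartitionOn.not_subset_of_ne (hp : IsPartitionOn S p) (hX : IsBlock p X)
    (hY : IsBlock p Y) (hXY : X ≠ Y) : ¬ X ⊆ Y := fun h =>
  let ⟨_, hx⟩ := hX.nonempty_s10
  hXY (hp.block_eq_of_mem hX hY hx (h hx))

theorem NonCrossing.block_eq_of_interleaved (hnc : NonCrossing p) (hp : IsPartitionOn S p)
    (hX : IsBlock p X) (hY : IsBlock p Y) {a b c d : ℕ} (hab : a < b) (hbc : b < c)
    (hcd : c < d) (ha : a ∈ X) (hb : b ∈ Y) (hc : c ∈ X) (hd : d ∈ Y) : X = Y :=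
  hp.block_eq_of_mem hX hY ((hp.rel_iff_mem hX ha).1 <|
    hnc a b c d hab hbc hcd ((hp.rel_iff_mem hX ha).2 hc) ((hp.rel_iff_mem hY hb).2 hd)) hb

end Blocks

section Nesting

variable {A B X Y Z : Set ℕ}

theorem Nested.trans (hXY : Nested X Y) (hYZ : Nested Y Z) : Nested X Z :=
  ⟨hYZ.1.trans hXY.1, hXY.2.trans hYZ.2⟩

theorem Nested.irrefl (X : Set ℕ) : ¬ Nested X X := fun h => h.1.false

theorem Nested.mono_right (h : Nested X A) (hA : A.Nonempty) (hB : BddAbove B) (hAB : A ⊆ B) :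
    Nested X B :=
  ⟨(csInf_le_csInf' hA hAB).trans_lt h.1, h.2.trans_le (csSup_le_csSup' hB hAB)⟩

theorem Nested.anti_left (h : Nested B X) (hA : A.Nonempty) (hB : BddAbove B) (hAB : A ⊆ B) :
    Nested A X :=
  ⟨h.1.trans_le (csInf_le_csInf' hA hAB), (csSup_le_csSup' hB hAB).trans_lt h.2⟩

theorem not_nested_of_sInf_mem (hZ : Z.Nonempty) (hZB : Z ⊆ B) (hX : sInf B ∈ X) :
    ¬ Nested X Z := fun h =>
  (h.1.trans_le (Nat.sInf_le hX)).not_ge (csInf_le_csInf' hZ hZB)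

theorem not_nested_of_sSup_mem (hB : BddAbove B) (hXB : X ⊆ B) (hZB : Z ⊆ B)
    (hX : sSup B ∈ X) : ¬ Nested X Z := fun h =>
  (h.2.trans_le (csSup_le_csSup' hB hZB)).not_ge (le_csSup (hB.mono hXB) hX)

theorem NonCrossing.nested_of_nested_subset {S : Set ℕ} {p : ℕ → ℕ → Prop}
    (hnc : NonCrossing p) (hp : IsPartitionOn S p) (hS : BddAbove S) (hB : IsBlock p B)
    (hX : IsBlock p X) (hXB : X ≠ B) (hAB : A ⊆ B) (hA : A.Nonempty) (h : Nested A X) :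
    Nested B X := by
  obtain ⟨b, hb⟩ := hA
  have hBbdd : BddAbove B := hS.mono (hp.block_subset hB)
  have ha : sInf X ∈ X := Nat.sInf_mem hX.nonempty_s10
  have hd : sSup X ∈ X := Nat.sSup_mem hX.nonempty_s10 (hS.mono (hp.block_subset hX))
  have hab : sInf X < b := h.1.trans_le (Nat.sInf_le hb)
  have hbd : b < sSup X := (le_csSup (hBbdd.mono hAB) hb).trans_lt h.2
  have hdisj : ∀ x ∈ X, x ∉ B := fun x hxX hxB => hXB (hp.block_eq_of_mem hX hB hxX hxB)
  constructor
  · by_contra! hle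
    have hmin : sInf B ∈ B := Nat.sInf_mem hB.nonempty_s10
    have hlt : sInf B < sInf X := hle.lt_of_ne fun he => hdisj _ ha (he ▸ hmin)
    exact hXB (hnc.block_eq_of_interleaved hp hB hX hlt hab hbd hmin ha (hAB hb) hd).symm
  · by_contra! hle
    have hmax : sSup B ∈ B := Nat.sSup_mem hB.nonempty_s10 hBbdd
    have hlt : sSup X < sSup B := hle.lt_of_ne fun he => hdisj _ hd (he ▸ hmax)
    exact hXB (hnc.block_eq_of_interleaved hp hX hB hab hbd hlt ha (hAB hb) hd hmax)

end Nesting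

section Parts

variable {B : Set ℕ} {i : ℕ}

theorem lowerPart_subset : lowerPart B i ⊆ B := fun _ hx => hx.1

theorem upperPart_subset : upperPart B i ⊆ B := fun _ hx => hx.1

theorem notMem_upperPart_of_mem_lowerPart {x : ℕ} (hx : x ∈ lowerPart B i) :
    x ∉ upperPart B i := fun hx' => hx.2.not_gt hx'.2

theorem mem_lowerPart_or_mem_upperPart {x : ℕ} (hx : x ∈ B) :
    x ∈ lowerPart B i ∨ x ∈ upperPart B i :=
  (le_or_gt _ i).imp (fun h => ⟨hx, h⟩) (fun h => ⟨hx, h⟩)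

theorem ncard_inter_Iic_mono (hB : B.Finite) {x y : ℕ} (h : x ≤ y) :
    (B ∩ Set.Iic x).ncard ≤ (B ∩ Set.Iic y).ncard :=
  Set.ncard_le_ncard (Set.inter_subset_inter_right _ (Set.Iic_subset_Iic.2 h))
    (hB.inter_of_left _)

theorem sInf_mem_lowerPart (hB : B.Nonempty) (hi : 1 ≤ i) : sInf B ∈ lowerPart B i := by
  have hmin : sInf B ∈ B := Nat.sInf_mem hB
  have : B ∩ Set.Iic (sInf B) = {sInf B} := Set.eq_singleton_iff_unique_mem.2
    ⟨⟨hmin, Set.mem_Iic.2 le_rfl⟩, fun x hx => le_antisymm hx.2 (Nat.sInf_le hx.1)⟩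
  exact ⟨hmin, by rwa [this, Set.ncard_singleton]⟩

theorem sSup_mem_upperPart (hB : B.Finite) (hB' : B.Nonempty) (hi : i < B.ncard) :
    sSup B ∈ upperPart B i := by
  have : B ∩ Set.Iic (sSup B) = B :=
    Set.inter_eq_self_of_subset_left fun x hx => le_csSup hB.bddAbove hx
  exact ⟨Nat.sSup_mem hB' hB.bddAbove, by rwa [this]⟩

end Parts

section Split

variable {S B : Set ℕ} {p : ℕ → ℕ → Prop} {i : ℕ}

theorem IsPartitionOn.splitRel (hp : IsPartitionOn S p) (B : Set ℕ) (i : ℕ) :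
    IsPartitionOn S (splitRel p B i) := by
  refine ⟨fun x y ⟨hxy, h⟩ => ⟨hp.1 x y hxy, by tauto⟩, ?_, fun x => ?_⟩
  · rintro x y z ⟨hxy, h⟩ ⟨hyz, h'⟩
    have hLU : y ∈ lowerPart B i → y ∉ upperPart B i := notMem_upperPart_of_mem_lowerPart
    have hL : y ∈ lowerPart B i → y ∈ B := fun hy => lowerPart_subset hy
    have hU : y ∈ upperPart B i → y ∈ B := fun hy => upperPart_subset hy
    exact ⟨hp.2.1 x y z hxy hyz, by tauto⟩
  · refine ⟨fun h => (hp.2.2 x).1 h.1, fun hx => ⟨(hp.2.2 x).2 hx, ?_⟩⟩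
    by_cases hxB : x ∈ B
    · rcases mem_lowerPart_or_mem_upperPart (i := i) hxB with h | h
      exacts [Or.inl ⟨h, h⟩, Or.inr (Or.inl ⟨h, h⟩)]
    · exact Or.inr (Or.inr ⟨hxB, hxB⟩)

theorem NonCrossing.splitRel (hnc : NonCrossing p) (hp : IsPartitionOn S p) (hB : IsBlock p B)
    (hBfin : B.Finite) (i : ℕ) : NonCrossing (splitRel p B i) := by
  rintro x y z w hxy hyz hzw ⟨hpxz, hxz⟩ ⟨hpyw, -⟩
  have hpxy := hnc x y z w hxy hyz hzw hpxz hpyw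
  refine ⟨hpxy, ?_⟩
  rcases hxz with ⟨hx, hz⟩ | ⟨hx, -⟩ | ⟨hx, -⟩
  · have hy := (hp.rel_iff_mem hB hx.1).1 hpxy
    exact Or.inl ⟨hx, hy, (ncard_inter_Iic_mono hBfin hyz.le).trans hz.2⟩
  · have hy := (hp.rel_iff_mem hB hx.1).1 hpxy
    exact Or.inr (Or.inl ⟨hx, hy, hx.2.trans_le (ncard_inter_Iic_mono hBfin hxy.le)⟩)
  · exact Or.inr (Or.inr ⟨hx, fun hy => hx ((hp.rel_iff_mem hB hy).1 (hp.1 x y hpxy))⟩)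

theorem setOf_splitRel_of_mem_lowerPart (hp : IsPartitionOn S p) (hB : IsBlock p B) {x : ℕ}
    (hx : x ∈ lowerPart B i) : {y | splitRel p B i x y} = lowerPart B i := by
  ext y
  refine ⟨fun ⟨_, h⟩ => ?_, fun hy => ⟨(hp.rel_iff_mem hB hx.1).2 hy.1, Or.inl ⟨hx, hy⟩⟩⟩
  rcases h with ⟨-, hy⟩ | ⟨hx', -⟩ | ⟨hx', -⟩
  exacts [hy, (notMem_upperPart_of_mem_lowerPart hx hx').elim, (hx' hx.1).elim]

theorem setOf_splitRel_of_mem_upperPart (hp : IsPartitionOn S p) (hB : IsBlock p B) {x : ℕ}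
    (hx : x ∈ upperPart B i) : {y | splitRel p B i x y} = upperPart B i := by
  ext y
  refine ⟨fun ⟨_, h⟩ => ?_, fun hy => ⟨(hp.rel_iff_mem hB hx.1).2 hy.1, Or.inr (Or.inl ⟨hx, hy⟩)⟩⟩
  rcases h with ⟨hx', -⟩ | ⟨-, hy⟩ | ⟨hx', -⟩
  exacts [(notMem_upperPart_of_mem_lowerPart hx' hx).elim, hy, (hx' hx.1).elim]

theorem setOf_splitRel_of_notMem (hp : IsPartitionOn S p) (hB : IsBlock p B) {x : ℕ}
    (hx : x ∉ B) : {y | splitRel p B i x y} = {y | p x y} := by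
  ext y
  refine ⟨fun h => h.1, fun hy => ⟨hy, Or.inr (Or.inr ⟨hx, fun hyB => hx ?_⟩)⟩⟩
  exact (hp.rel_iff_mem hB hyB).1 (hp.1 x y hy)

theorem isBlock_splitRel_iff (hp : IsPartitionOn S p) (hB : IsBlock p B) (hBfin : B.Finite)
    (hi1 : 1 ≤ i) (hi2 : i < B.ncard) {C : Set ℕ} :
    IsBlock (splitRel p B i) C ↔
      C = lowerPart B i ∨ C = upperPart B i ∨ (IsBlock p C ∧ C ≠ B) := by
  constructor
  · rintro ⟨x, hxx, rfl⟩
    rcases hxx.2 with ⟨hx, -⟩ | ⟨hx, -⟩ | ⟨hx, -⟩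
    · exact Or.inl (setOf_splitRel_of_mem_lowerPart hp hB hx)
    · exact Or.inr (Or.inl (setOf_splitRel_of_mem_upperPart hp hB hx))
    · rw [setOf_splitRel_of_notMem hp hB hx]
      exact Or.inr (Or.inr ⟨⟨x, hxx.1, rfl⟩, fun h => hx (h ▸ hxx.1)⟩)
  · rintro (rfl | rfl | ⟨hC, hCB⟩)
    · have hx := sInf_mem_lowerPart hB.nonempty_s10 hi1
      exact ⟨_, ⟨(hp.rel_iff_mem hB hx.1).2 hx.1, Or.inl ⟨hx, hx⟩⟩,
        (setOf_splitRel_of_mem_lowerPart hp hB hx).symm⟩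
    · have hx := sSup_mem_upperPart hBfin hB.nonempty_s10 hi2
      exact ⟨_, ⟨(hp.rel_iff_mem hB hx.1).2 hx.1, Or.inr (Or.inl ⟨hx, hx⟩)⟩,
        (setOf_splitRel_of_mem_upperPart hp hB hx).symm⟩
    · obtain ⟨u, hu, rfl⟩ := hC
      have huB : u ∉ B := fun huB => hCB (hp.block_eq_of_mem ⟨u, hu, rfl⟩ hB hu huB)
      exact ⟨u, ⟨hu, Or.inr (Or.inr ⟨huB, huB⟩)⟩, (setOf_splitRel_of_notMem hp hB huB).symm⟩

end Split

section Depth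

def chainLengths (q : ℕ → ℕ → Prop) (C : Set ℕ) : Set ℕ :=
  {m : ℕ | ∃ c : ℕ → Set ℕ, c 1 = C ∧
    (∀ i, 1 ≤ i → i ≤ m → IsBlock q (c i)) ∧
    (∀ i, 1 ≤ i → i < m → Nested (c i) (c (i + 1)))}

theorem depth_eq_sSup_chainLengths (q : ℕ → ℕ → Prop) (C : Set ℕ) :
    depth q C = sSup (chainLengths q C) := rfl

theorem bddAbove_chainLengths_s10 (q : ℕ → ℕ → Prop) (C : Set ℕ) :
    BddAbove (chainLengths q C) := by
  refine ⟨sInf C + 1, ?_⟩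
  rintro m ⟨c, rfl, -, hc⟩
  -- the infima of the blocks strictly decrease along a chain
  have hdecr : ∀ j, 1 ≤ j → j ≤ m → sInf (c j) + j ≤ sInf (c 1) + 1 := by
    intro j hj
    induction j, hj using Nat.le_induction with
    | base => exact fun _ => le_rfl
    | succ j hj ih =>
      intro hjm
      have := (hc j hj (by omega)).1
      have := ih (by omega)
      omega
  rcases Nat.eq_zero_or_pos m with rfl | hm
  · exact Nat.zero_le _
  · have := hdecr m hm le_rfl
    omega

theorem depth_le_depth_of_map {q r : ℕ → ℕ → Prop} {C : Set ℕ} (f : Set ℕ → Set ℕ)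
    (hblock : ∀ X, (X = C ∨ Nested C X) → IsBlock q X → IsBlock r (f X))
    (hnest : ∀ X Y, (X = C ∨ Nested C X) → IsBlock q X → IsBlock q Y → Nested X Y →
      Nested (f X) (f Y)) :
    depth q C ≤ depth r (f C) := by
  rw [depth_eq_sSup_chainLengths, depth_eq_sSup_chainLengths]
  refine csSup_le_csSup (bddAbove_chainLengths_s10 r (f C))
    ⟨0, fun _ => C, rfl, fun _ _ _ => by omega, fun _ _ _ => by omega⟩ ?_
  rintro m ⟨c, hc1, hblk, hc⟩
  have above : ∀ j, 1 ≤ j → j ≤ m → c j = C ∨ Nested C (c j) := by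
    intro j hj
    induction j, hj using Nat.le_induction with
    | base => exact fun _ => Or.inl hc1
    | succ j hj ih =>
      intro hjm
      rcases ih (by omega) with h | h
      · exact Or.inr (h ▸ hc j hj (by omega))
      · exact Or.inr (h.trans (hc j hj (by omega)))
  exact ⟨f ∘ c, by rw [Function.comp_apply, hc1],
    fun j h1 h2 => hblock _ (above j h1 h2) (hblk j h1 h2),
    fun j h1 h2 => hnest _ _ (above j h1 h2.le) (hblk j h1 h2.le) (hblk (j + 1) (by omega) h2)
      (hc j h1 h2)⟩

end Depth

section SplitDepth

open scoped Classical

variable {S B : Set ℕ} {p : ℕ → ℕ → Prop} {i : ℕ}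
  (hp : IsPartitionOn S p) (hS : S.Finite) (hB : IsBlock p B) (hi1 : 1 ≤ i) (hi2 : i < B.ncard)
include hp hS hB hi1 hi2

theorem depth_splitRel_le (hnc : NonCrossing p) (C : Set ℕ) :
    depth (splitRel p B i) C ≤ depth p (if C ⊆ B then B else C) := by
  have hBfin : B.Finite := hS.subset (hp.block_subset hB)
  have hblocks := fun {C} => isBlock_splitRel_iff (C := C) hp hB hBfin hi1 hi2
  refine depth_le_depth_of_map (fun X => if X ⊆ B then B else X) ?_ ?_
  · intro X _ hX
    rcases hblocks.1 hX with rfl | rfl | ⟨hX, hXB⟩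
    · rwa [if_pos lowerPart_subset]
    · rwa [if_pos upperPart_subset]
    · rwa [if_neg (hp.not_subset_of_ne hX hB hXB)]
  intro X Y _ hX hY hXY
  split_ifs with hXB hYB hYB
  · exfalso
    rcases hblocks.1 hX with rfl | rfl | ⟨hX, hXne⟩
    · exact not_nested_of_sInf_mem hY.nonempty_s10 hYB (sInf_mem_lowerPart hB.nonempty_s10 hi1) hXY
    · exact not_nested_of_sSup_mem hBfin.bddAbove hXB hYB
        (sSup_mem_upperPart hBfin hB.nonempty_s10 hi2) hXY
    · exact hp.not_subset_of_ne hX hB hXne hXB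
  · rcases hblocks.1 hY with rfl | rfl | ⟨hY, hYne⟩
    · exact absurd lowerPart_subset hYB
    · exact absurd upperPart_subset hYB
    · exact hnc.nested_of_nested_subset hp hS.bddAbove hB hY hYne hXB hX.nonempty_s10 hXY
  · exact hXY.mono_right hY.nonempty_s10 hBfin.bddAbove hYB
  · exact hXY

theorem depth_le_depth_splitRel {A : Set ℕ} (hA : IsBlock (splitRel p B i) A) (hAB : A ⊆ B) :
    depth p B ≤ depth (splitRel p B i) A := by
  have hBfin : B.Finite := hS.subset (hp.block_subset hB)
  have hblocks := fun {C} => isBlock_splitRel_iff (C := C) hp hB hBfin hi1 hi2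
  have := depth_le_depth_of_map (q := p) (r := splitRel p B i) (C := B)
    (fun X => if X = B then A else X) ?_ ?_
  · rwa [if_pos rfl] at this
  · rintro X hX hXblock
    split_ifs with hXB
    · exact hA
    · exact hblocks.2 (Or.inr (Or.inr ⟨hXblock, hXB⟩))
  · rintro X Y hX - - hXY
    have hYB : Y ≠ B := by
      rintro rfl
      rcases hX with rfl | hBX
      exacts [Nested.irrefl _ hXY, Nested.irrefl _ (hBX.trans hXY)]
    rw [if_neg hYB]
    split_ifs with hXB
    · exact (hXB ▸ hXY).anti_left hA.nonempty_s10 hBfin.bddAbove hAB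
    · exact hXY

end SplitDepth

/-- splitting a block `B` of a non-crossing partition `p` of `[n]`
into its `i` smallest elements `B₁` and the rest `B₂` yields a non-crossing
partition `p_{B,i}` with `d(B₁) = d(B₂) = d_p(B)`, and no other block gains depth. -/
theorem depth_splitRel
    (n : ℕ) (p : ℕ → ℕ → Prop)
    (hp : IsPartitionOn (Idx n) p) (hnc : NonCrossing p)
    (B : Set ℕ) (hB : IsBlock p B) (i : ℕ) (hi1 : 1 ≤ i) (hi2 : i < B.ncard) :
    IsPartitionOn (Idx n) (splitRel p B i) ∧
    NonCrossing (splitRel p B i) ∧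
    depth (splitRel p B i) (lowerPart B i) = depth p B ∧
    depth (splitRel p B i) (upperPart B i) = depth p B ∧
    (∀ B' : Set ℕ, IsBlock p B' → B' ≠ B →
      depth (splitRel p B i) B' ≤ depth p B') := by
  have hS : (Idx n).Finite := Set.finite_Icc 1 n
  have hBfin : B.Finite := hS.subset (hp.block_subset hB)
  have hblocks := fun {C} => isBlock_splitRel_iff (C := C) hp hB hBfin hi1 hi2
  have depth_part {A : Set ℕ} (hA : IsBlock (splitRel p B i) A) (hAB : A ⊆ B) :
      depth (splitRel p B i) A = depth p B :=
    le_antisymm (by simpa only [if_pos hAB] using depth_splitRel_le hp hS hB hi1 hi2 hnc A)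
      (depth_le_depth_splitRel hp hS hB hi1 hi2 hA hAB)
  refine ⟨hp.splitRel B i, hnc.splitRel hp hB hBfin i,
    depth_part (hblocks.2 (Or.inl rfl)) lowerPart_subset,
    depth_part (hblocks.2 (Or.inr (Or.inl rfl))) upperPart_subset, fun B' hB' hne => ?_⟩
  simpa only [if_neg (hp.not_subset_of_ne hB' hB hne)] using
    depth_splitRel_le hp hS hB hi1 hi2 hnc B'

end NCPaper
end
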